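/- Let n ≥ 2, let p₁ < p₂ < ⋯ < pₙ < 0 be reals and w₁, …, wₙ > 0. Then there exist constants C > 0 and x₀ > 0 such that for all x ≥ x₀: | (Σ_{i=1}^n w_i·x^{p_i−1}) / (Σ_{i=1}^n w_i·(1−p_i)·x^{p_i−2}) − x/(1−pₙ) | ≤ C·x^{p_{n−1}−pₙ+1}. -/

import Mathlib

/-!
With `q = pₙ`, clearing denominators turns the difference into
`(∑ wᵢ (pᵢ - q) x^(pᵢ-1)) / ((1 - q) ∑ wᵢ (1 - pᵢ) x^(pᵢ-2))`. The leading term of the numerator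
cancels, so for `x ≥ 1` it is at most `(∑ wᵢ (q - pᵢ)) x^(p_{n-1}-1)`, while the denominator is
at least its own leading term `wₙ (1 - q)² x^(q-2)`.
-/

open Finset Real

section
variable {ι : Type*} (w p : ι → ℝ)

theorem sum_mul_rpow_sub_sum_mul_rpow_mul (s : Finset ι) (q : ℝ) {x : ℝ} (hx : 0 < x) :
    (∑ i ∈ s, w i * x ^ (p i - 1)) * (1 - q) - (∑ i ∈ s, w i * (1 - p i) * x ^ (p i - 2)) * x =
      ∑ i ∈ s, w i * (p i - q) * x ^ (p i - 1) := by
  rw [sum_mul, sum_mul, ← sum_sub_distrib]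
  refine sum_congr rfl fun i _ => ?_
  rw [show p i - 1 = p i - 2 + 1 by ring, rpow_add_one hx.ne']
  ring

theorem abs_sum_mul_sub_mul_rpow_le {s : Finset ι} {q r x : ℝ} (hw : ∀ i ∈ s, 0 ≤ w i)
    (hpq : ∀ i ∈ s, p i ≤ q) (hpr : ∀ i ∈ s, p i ≠ q → p i ≤ r) (hx : 1 ≤ x) :
    |∑ i ∈ s, w i * (p i - q) * x ^ (p i - 1)| ≤ (∑ i ∈ s, w i * (q - p i)) * x ^ (r - 1) := by
  rw [sum_mul]
  refine (abs_sum_le_sum_abs _ _).trans (sum_le_sum fun i hi => ?_)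
  rw [abs_mul, abs_mul, abs_of_nonneg (hw i hi), abs_of_nonpos (sub_nonpos.2 (hpq i hi)),
    abs_of_pos (rpow_pos_of_pos (by linarith) _), neg_sub]
  rcases eq_or_ne (p i) q with h | h
  · simp [h]
  · exact mul_le_mul_of_nonneg_left (rpow_le_rpow_of_exponent_le hx (by linarith [hpr i hi h]))
      (mul_nonneg (hw i hi) (sub_nonneg.2 (hpq i hi)))

theorem abs_sum_rpow_div_sum_rpow_sub_div_le [Fintype ι] {a : ι} {r x : ℝ}
    (hw : ∀ i, 0 ≤ w i) (hwa : 0 < w a) (hpa : ∀ i, p i ≤ p a) (hpa1 : p a < 1)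
    (hpr : ∀ i, p i ≠ p a → p i ≤ r) (hx : 1 ≤ x) :
    |(∑ i, w i * x ^ (p i - 1)) / (∑ i, w i * (1 - p i) * x ^ (p i - 2)) - x / (1 - p a)| ≤
      (∑ i, w i * (p a - p i)) / (w a * (1 - p a) ^ 2) * x ^ (r - p a + 1) := by
  have hx0 : 0 < x := by linarith
  have hq : 0 < 1 - p a := by linarith
  have hD : w a * (1 - p a) * x ^ (p a - 2) ≤ ∑ i, w i * (1 - p i) * x ^ (p i - 2) :=
    single_le_sum (f := fun i => w i * (1 - p i) * x ^ (p i - 2))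
      (fun i _ => mul_nonneg (mul_nonneg (hw i) (sub_nonneg.2 ((hpa i).trans hpa1.le)))
        (rpow_pos_of_pos hx0 _).le) (mem_univ a)
  have hDa : 0 < w a * (1 - p a) * x ^ (p a - 2) := by positivity
  have hS : 0 ≤ ∑ i, w i * (p a - p i) :=
    sum_nonneg fun i _ => mul_nonneg (hw i) (sub_nonneg.2 (hpa i))
  rw [div_sub_div _ _ (hDa.trans_le hD).ne' hq.ne', sum_mul_rpow_sub_sum_mul_rpow_mul w p _ _ hx0,
    abs_div, abs_of_pos (mul_pos (hDa.trans_le hD) hq)]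
  calc _ ≤ (∑ i, w i * (p a - p i)) * x ^ (r - 1) / (w a * (1 - p a) * x ^ (p a - 2) * (1 - p a)) :=
        div_le_div₀ (by positivity)
          (abs_sum_mul_sub_mul_rpow_le w p (fun i _ => hw i) (fun i _ => hpa i)
            (fun i _ => hpr i) hx)
          (by positivity) (mul_le_mul_of_nonneg_right hD hq.le)
    _ = _ := by
        rw [show r - 1 = r - p a + 1 + (p a - 2) by ring, rpow_add hx0]
        field_simp

end

/-- Estimate on the absolute risk tolerance of a collective utility under a linear sharing
rule (proof of Proposition 2.13): for large `x`,
`|ART₁(x) - x/(1-pₙ)| ≤ C x^{p_{n-1}-pₙ+1}`. -/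
theorem linear_sharing_ART_estimate
    (n : ℕ) (hn : 2 ≤ n)
    (p : Fin n → ℝ) (hpmono : StrictMono p) (hpneg : ∀ i, p i < 0)
    (w : Fin n → ℝ) (hw : ∀ i, 0 < w i) :
    ∃ C : ℝ, 0 < C ∧ ∃ x₀ : ℝ, 0 < x₀ ∧ ∀ x : ℝ, x₀ ≤ x →
      |(∑ i, w i * x ^ (p i - 1)) / (∑ i, w i * (1 - p i) * x ^ (p i - 2)) -
          x / (1 - p ⟨n - 1, by omega⟩)| ≤
        C * x ^ (p ⟨n - 2, by omega⟩ - p ⟨n - 1, by omega⟩ + 1) := by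
  set a : Fin n := ⟨n - 1, by omega⟩ with ha
  set b : Fin n := ⟨n - 2, by omega⟩ with hb
  have hba : b < a := Fin.lt_def.2 (by simp only [ha, hb]; omega)
  have hpa : ∀ i, p i ≤ p a := fun i =>
    hpmono.monotone (Fin.le_iff_val_le_val.2 (by simp only [ha]; omega))
  have hpb : ∀ i, p i ≠ p a → p i ≤ p b := fun i hi => by
    have : (i : ℕ) ≠ a := fun h => hi (congrArg p (Fin.ext h))
    exact hpmono.monotone (Fin.le_iff_val_le_val.2 (by simp only [ha, hb] at this ⊢; omega))
  have hS : 0 < ∑ i, w i * (p a - p i) :=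
    sum_pos' (fun i _ => mul_nonneg (hw i).le (sub_nonneg.2 (hpa i)))
      ⟨b, mem_univ b, mul_pos (hw b) (sub_pos.2 (hpmono hba))⟩
  have hq : 0 < 1 - p a := by linarith [hpneg a]
  exact ⟨_, div_pos hS (mul_pos (hw a) (pow_pos hq 2)), 1, one_pos, fun x hx =>
    abs_sum_rpow_div_sum_rpow_sub_div_le w p (fun i => (hw i).le) (hw a) hpa (by linarith) hpb hx⟩
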